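/- Let $K$ be a compact Hausdorff space containing a dense discrete subset $D$, and let $D \subseteq X \subseteq K$. Suppose that every sequence $(D_n)_{n\in\omega}$ of pairwise disjoint finite nonempty subsets of $D$ has an accumulation point in the Vietoris hyperspace $\mathrm{CL}(X)$. Then every sequence of nonempty finite subsets of $D$ has an accumulation point in $\mathrm{CL}(X)$, and hence $\mathrm{CL}(X)$ is pseudocompact. -/

import Mathlib

/-!
Pass to a subsequence along which the finite sets split as `A n = U n ∪ D n`, with `U n`
increasing and the `D n` pairwise disjoint: fixing a nonprincipal ultrafilter `u` on `ℕ`, `U n`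
is the part of `A n` lying in `B = {d | d ∈ A m for u-almost all m}`. If `G` is an accumulation
point of the `D n`, then `closure (⋃ U n) ∪ G` is an accumulation point of the `A n`; if almost
all `D n` are empty, the `A n` increase and accumulate at the closure of their union. The finite
subsets of `D` are dense in `CL(X)`, so a continuous real function unbounded on `CL(X)` would be
unbounded on a sequence of them, which has an accumulation point.
-/

open Filter

/-- The Vietoris hyperspace `CL(X)` of nonempty closed subsets of `X`. -/
def CL (X : Type*) [TopologicalSpace X] : Type _ := {F : Set X // F.Nonempty ∧ IsClosed F}

/-- The Vietoris topology. -/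
instance CL.instTopologicalSpace (X : Type*) [TopologicalSpace X] : TopologicalSpace (CL X) :=
  TopologicalSpace.generateFrom
    {S | ∃ A : Set X, IsOpen A ∧
      (S = {F : CL X | F.1 ⊆ A} ∨ S = {F : CL X | (F.1 ∩ A).Nonempty})}

open Set Topology Function

theorem exists_nice_dissection {α : Type*} (A : ℕ → Set α) (hA : ∀ n, (A n).Finite) :
    ∃ (φ : ℕ → ℕ) (B : Set α), StrictMono φ ∧ Monotone (fun k => A (φ k) ∩ B) ∧
      Pairwise (Disjoint on fun k => A (φ k) \ B) := by
  set u := Ultrafilter.of (atTop : Filter ℕ)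
  set B : Set α := {a | ∀ᶠ m in u, a ∈ A m}
  have hnext : ∀ n, ∃ m, n < m ∧ A n ∩ B ⊆ A m ∧ Disjoint (A m \ B) (⋃ i ∈ Iic n, A i) := by
    intro n
    have hfar : ∀ᶠ m in u, n < m := Ultrafilter.of_le atTop (eventually_gt_atTop n)
    have hkeep : ∀ᶠ m in u, ∀ a ∈ A n ∩ B, a ∈ A m :=
      (eventually_all_finite ((hA n).inter_of_left B)).mpr fun a ha => ha.2
    have hdrop : ∀ᶠ m in u, ∀ a ∈ (⋃ i ∈ Iic n, A i) \ B, a ∉ A m :=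
      (eventually_all_finite (((finite_Iic n).biUnion fun i _ => hA i).sdiff)).mpr
        fun a ha => Ultrafilter.eventually_not.mpr ha.2
    obtain ⟨m, hm, hkeep, hdrop⟩ := (hfar.and (hkeep.and hdrop)).exists
    exact ⟨m, hm, hkeep, disjoint_left.mpr fun a ha ha' => hdrop a ⟨ha', ha.2⟩ ha.1⟩
  choose g hg_gt hg_keep hg_drop using hnext
  set φ : ℕ → ℕ := fun k => g^[k] 0
  have hφ_succ : ∀ k, φ (k + 1) = g (φ k) := fun k => iterate_succ_apply' g k 0
  have hφ : StrictMono φ := strictMono_nat_of_lt_succ fun k => hφ_succ k ▸ hg_gt (φ k)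
  refine ⟨φ, B, hφ, monotone_nat_of_le_succ fun k => ?_, (pairwise_disjoint_on _).mpr ?_⟩
  · rw [hφ_succ]
    exact subset_inter (hg_keep _) inter_subset_right
  · intro j k hjk
    obtain ⟨l, rfl⟩ := Nat.exists_eq_add_of_lt hjk
    rw [hφ_succ]
    refine (hg_drop _).symm.mono_left (sdiff_subset.trans ?_)
    exact subset_biUnion_of_mem (u := A) (mem_Iic.mpr (hφ.monotone (Nat.le_add_right j l)))

namespace CL

variable {Y : Type*} [TopologicalSpace Y]

theorem isOpen_setOf_subset {A : Set Y} (hA : IsOpen A) : IsOpen {F : CL Y | F.1 ⊆ A} :=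
  TopologicalSpace.isOpen_generateFrom_of_mem ⟨A, hA, Or.inl rfl⟩

theorem isOpen_setOf_inter_nonempty {A : Set Y} (hA : IsOpen A) :
    IsOpen {F : CL Y | (F.1 ∩ A).Nonempty} :=
  TopologicalSpace.isOpen_generateFrom_of_mem ⟨A, hA, Or.inr rfl⟩

theorem tendsto_of_monotone_union {l : Filter ℕ} (hl : l ≤ atTop) {U : ℕ → Set Y}
    (hU : Monotone U) {Q QD : ℕ → CL Y} {G : CL Y} (hG : Tendsto QD l (𝓝 G))
    (hQ : ∀ n, (Q n).1 = U n ∪ (QD n).1) (F : CL Y) (hF : F.1 = closure (⋃ n, U n) ∪ G.1) :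
    Tendsto Q l (𝓝 F) := by
  refine TopologicalSpace.tendsto_nhds_generateFrom_iff.mpr ?_
  rintro s ⟨A, hA, rfl | rfl⟩ hFs <;> simp only [mem_ofPred_eq, hF] at hFs
  · have hUA : ∀ n, U n ⊆ A := fun n =>
      (subset_iUnion U n).trans (subset_closure.trans (subset_union_left.trans hFs))
    filter_upwards [hG ((isOpen_setOf_subset hA).mem_nhds (subset_union_right.trans hFs))]
      with n hn
    simpa only [mem_preimage, mem_ofPred_eq, hQ n] using union_subset (hUA n) hn
  · obtain ⟨x, hx | hx, hxA⟩ := hFs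
    · obtain ⟨y, hyU, hyA⟩ := (closure_inter_open_nonempty_iff hA).mp ⟨x, hx, hxA⟩
      obtain ⟨k, hk⟩ := mem_iUnion.mp hyU
      filter_upwards [hl (eventually_ge_atTop k)] with n hn
      simp only [mem_preimage, mem_ofPred_eq, hQ n]
      exact ⟨y, Or.inl (hU hn hk), hyA⟩
    · filter_upwards [hG ((isOpen_setOf_inter_nonempty hA).mem_nhds ⟨x, hx, hxA⟩)]
        with n ⟨y, hy, hyA⟩
      simp only [mem_preimage, mem_ofPred_eq, hQ n]
      exact ⟨y, Or.inr hy, hyA⟩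

theorem exists_mapClusterPt_of_monotone_union {U : ℕ → Set Y} (hU : Monotone U)
    {Q QD : ℕ → CL Y} {G : CL Y} (hG : MapClusterPt G atTop QD)
    (hQ : ∀ n, (Q n).1 = U n ∪ (QD n).1) : ∃ F : CL Y, MapClusterPt F atTop Q := by
  obtain ⟨𝒰, h𝒰, hG⟩ := mapClusterPt_iff_ultrafilter.mp hG
  let F : CL Y := ⟨closure (⋃ n, U n) ∪ G.1, G.2.1.mono subset_union_right,
    isClosed_closure.union G.2.2⟩
  exact ⟨F, mapClusterPt_iff_ultrafilter.mpr
    ⟨𝒰, h𝒰, tendsto_of_monotone_union h𝒰 hU hG hQ F rfl⟩⟩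

theorem exists_mapClusterPt_of_monotone {Q : ℕ → CL Y} (hQ : Monotone fun n => (Q n).1) :
    ∃ F : CL Y, MapClusterPt F atTop Q :=
  exists_mapClusterPt_of_monotone_union hQ (tendsto_const_nhds (x := Q 0)).mapClusterPt
    fun n => (union_eq_left.mpr (hQ (Nat.zero_le n))).symm

theorem exists_mapClusterPt_of_finite [T1Space Y] {S : Set Y}
    (hdisj : ∀ Q : ℕ → CL Y, (∀ n, (Q n).1.Finite) → (∀ n, (Q n).1 ⊆ S) →
      Pairwise (Disjoint on fun n => (Q n).1) → ∃ F : CL Y, MapClusterPt F atTop Q)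
    (Q : ℕ → CL Y) (hQfin : ∀ n, (Q n).1.Finite) (hQS : ∀ n, (Q n).1 ⊆ S) :
    ∃ F : CL Y, MapClusterPt F atTop Q := by
  obtain ⟨φ, B, hφ, hU, hD⟩ := exists_nice_dissection (fun n => (Q n).1) hQfin
  suffices ∃ ψ : ℕ → ℕ, StrictMono ψ ∧ ∃ F : CL Y, MapClusterPt F atTop (Q ∘ φ ∘ ψ) by
    obtain ⟨ψ, hψ, F, hF⟩ := this
    exact ⟨F, hF.of_comp (hφ.comp hψ).tendsto_atTop⟩
  have hsplit : ∀ k, (Q (φ k)).1 = ((Q (φ k)).1 ∩ B) ∪ ((Q (φ k)).1 \ B) := fun k =>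
    (inter_union_sdiff _ _).symm
  have hem : ∃ᶠ k in atTop, ((Q (φ k)).1 \ B).Nonempty ∨ ¬((Q (φ k)).1 \ B).Nonempty :=
    Frequently.of_forall fun _ => em _
  rcases frequently_or_distrib.mp hem with hne | hempty
  · obtain ⟨ψ, hψ, hne⟩ := extraction_of_frequently_atTop hne
    let QD : ℕ → CL Y := fun k =>
      ⟨(Q (φ (ψ k))).1 \ B, hne k, ((hQfin _).sdiff).isClosed⟩
    obtain ⟨G, hG⟩ := hdisj QD (fun k => (hQfin _).sdiff) (fun k => sdiff_subset.trans (hQS _))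
      (hD.comp_of_injective hψ.injective)
    exact ⟨ψ, hψ, exists_mapClusterPt_of_monotone_union (hU.comp hψ.monotone) hG
      fun k => hsplit (ψ k)⟩
  · obtain ⟨ψ, hψ, hempty⟩ := extraction_of_frequently_atTop hempty
    have hQU : ∀ k, (Q (φ (ψ k))).1 = (Q (φ (ψ k))).1 ∩ B := fun k => by
      rw [← union_empty ((Q (φ (ψ k))).1 ∩ B), ← not_nonempty_iff_eq_empty.mp (hempty k)]
      exact hsplit (ψ k)
    refine ⟨ψ, hψ, exists_mapClusterPt_of_monotone fun j k hjk => ?_⟩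
    simp only [Function.comp_apply]
    rw [hQU j, hQU k]
    exact hU (hψ.monotone hjk)

theorem dense_setOf_finite_subset [T1Space Y] {S : Set Y} (hS : Dense S) :
    Dense {P : CL Y | P.1.Finite ∧ P.1 ⊆ S} := by
  refine (TopologicalSpace.isTopologicalBasis_of_subbasis rfl).dense_iff.mpr ?_
  rintro _ ⟨f, ⟨hf, hfsub⟩, rfl⟩ ⟨F, hF⟩
  have hfsub' : ∀ s ∈ f, ∃ A : Set Y, IsOpen A ∧
      (s = {F : CL Y | F.1 ⊆ A} ∨ s = {F : CL Y | (F.1 ∩ A).Nonempty}) := hfsub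
  choose! A hAo hA using hfsub'
  -- Points of `U` meet every constraint `P ⊆ A`; one witness per set `A` met by `F` does the rest.
  set U := ⋂ s ∈ {s ∈ f | F.1 ⊆ A s}, A s
  have hUo : IsOpen U := (hf.subset (sep_subset _ _)).isOpen_biInter fun s hs => hAo s hs.1
  have hFU : F.1 ⊆ U := subset_iInter₂ fun s hs => hs.2
  obtain ⟨x₀, hx₀U, hx₀S⟩ := hS.inter_open_nonempty _ hUo (F.2.1.mono hFU)
  have : Nonempty Y := ⟨x₀⟩
  have hwitness : ∀ s ∈ f, ∃ x ∈ S, x ∈ U ∧ ((F.1 ∩ A s).Nonempty → x ∈ A s) := by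
    intro s hs
    by_cases hFA : (F.1 ∩ A s).Nonempty
    · obtain ⟨x, ⟨hxU, hxA⟩, hx⟩ :=
        hS.inter_open_nonempty _ (hUo.inter (hAo s hs)) (hFA.mono (inter_subset_inter_left _ hFU))
      exact ⟨x, hx, hxU, fun _ => hxA⟩
    · exact ⟨x₀, hx₀S, hx₀U, fun h => absurd h hFA⟩
  choose! x hxS hxU hxA using hwitness
  set E := insert x₀ (x '' f)
  have hEfin : E.Finite := (hf.image x).insert x₀
  have hEU : E ⊆ U := insert_subset hx₀U (image_subset_iff.mpr hxU)
  refine ⟨⟨E, insert_nonempty _ _, hEfin.isClosed⟩, fun s hs => ?_,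
    hEfin, insert_subset hx₀S (image_subset_iff.mpr hxS)⟩
  have hFs := hF s hs
  rcases hA s hs with hsA | hsA <;> rw [hsA] at hFs ⊢
  · exact hEU.trans (biInter_subset_of_mem ⟨hs, hFs⟩)
  · exact ⟨x s, mem_insert_of_mem _ (mem_image_of_mem x hs), hxA s hs hFs⟩

end CL

theorem Continuous.isBounded_range_of_dense_of_mapClusterPt {Z E : Type*} [TopologicalSpace Z]
    [SeminormedAddCommGroup E] {f : Z → E} (hf : Continuous f) {S : Set Z} (hS : Dense S)
    (hS_clust : ∀ u : ℕ → Z, (∀ n, u n ∈ S) → ∃ z, MapClusterPt z atTop u) :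
    Bornology.IsBounded (range f) := by
  refine (Bornology.IsBounded.closure ?_).subset (hf.range_subset_closure_image_dense hS)
  by_contra hunb
  have hlarge : ∀ n : ℕ, ∃ z ∈ S, (n : ℝ) < ‖f z‖ := by
    intro n
    by_contra! hn
    exact hunb (isBounded_iff_forall_norm_le.mpr ⟨n, forall_mem_image.mpr hn⟩)
  choose u huS hu using hlarge
  obtain ⟨z, hz⟩ := hS_clust u huS
  have hclust : MapClusterPt ‖f z‖ atTop (fun n => ‖f (u n)‖) :=
    hz.continuousAt_comp (f := fun z => ‖f z‖) hf.norm.continuousAt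
  have htop : Tendsto (fun n => ‖f (u n)‖) atTop atTop :=
    tendsto_atTop_mono (fun n => (hu n).le) tendsto_natCast_atTop_atTop
  obtain ⟨n, hlt, hge⟩ := ((hclust.frequently (Iio_mem_nhds (lt_add_one _))).and_eventually
    (htop.eventually_ge_atTop (‖f z‖ + 1))).exists
  exact (hlt.trans_le hge).false

theorem stmt18_general (K : Type*) [TopologicalSpace K] [T2Space K]
    (D : Set K) (hDdense : Dense D)
    (X : Set K) (hDX : D ⊆ X)
    (hyp : ∀ Dn : ℕ → Set K, (∀ n, (Dn n).Finite) → (∀ n, (Dn n).Nonempty) →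
      (∀ n, Dn n ⊆ D) → (∀ m n, m ≠ n → Disjoint (Dn m) (Dn n)) →
      ∀ Q : ℕ → CL ↥X, (∀ n, (Q n).1 = {x : ↥X | ↑x ∈ Dn n}) →
        ∃ F : CL ↥X, MapClusterPt F atTop Q) :
    (∀ An : ℕ → Set K, (∀ n, (An n).Finite) → (∀ n, (An n).Nonempty) →
      (∀ n, An n ⊆ D) →
      ∀ Q : ℕ → CL ↥X, (∀ n, (Q n).1 = {x : ↥X | ↑x ∈ An n}) →
        ∃ F : CL ↥X, MapClusterPt F atTop Q) ∧
    (∀ f : CL ↥X → ℝ, Continuous f → Bornology.IsBounded (Set.range f)) := by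
  set S : Set X := Subtype.val ⁻¹' D
  have hS : Dense S := Subtype.dense_iff.mpr <| by
    rw [image_preimage_eq_inter_range, Subtype.range_coe, inter_eq_left.mpr hDX,
      hDdense.closure_eq]
    exact subset_univ X
  have hclust : ∀ Q : ℕ → CL X, (∀ n, (Q n).1.Finite) → (∀ n, (Q n).1 ⊆ S) →
      ∃ F : CL X, MapClusterPt F atTop Q :=
    CL.exists_mapClusterPt_of_finite fun Q hfin hQS hdisj =>
      hyp (fun n => Subtype.val '' (Q n).1) (fun n => (hfin n).image _)
        (fun n => (Q n).2.1.image _) (fun n => image_subset_iff.mpr (hQS n))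
        (fun m n hmn => (disjoint_image_iff Subtype.val_injective).mpr (hdisj hmn)) Q
        (fun n => (Subtype.val_injective.preimage_image _).symm)
  refine ⟨fun An hfin _ hAD Q hQ => hclust Q (fun n => ?_) (fun n => ?_), fun f hf => ?_⟩
  · exact hQ n ▸ (hfin n).preimage Subtype.val_injective.injOn
  · exact hQ n ▸ preimage_mono (hAD n)
  · exact hf.isBounded_range_of_dense_of_mapClusterPt (CL.dense_setOf_finite_subset hS)
      fun u hu => hclust u (fun n => (hu n).1) fun n => (hu n).2

/-- Let `K` be a compactification of a discrete space `D` and `D ⊆ X ⊆ K`.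
If every sequence of pairwise disjoint finite nonempty subsets of `D` has an accumulation
point in `CL(X)`, then every sequence of finite nonempty subsets of `D` has an accumulation
point in `CL(X)`, and `CL(X)` is pseudocompact. -/
theorem stmt18 (K : Type*) [TopologicalSpace K] [CompactSpace K] [T2Space K]
    (D : Set K) (hDdense : Dense D) (hDdisc : DiscreteTopology ↥D)
    (X : Set K) (hDX : D ⊆ X)
    (hyp : ∀ Dn : ℕ → Set K, (∀ n, (Dn n).Finite) → (∀ n, (Dn n).Nonempty) →
      (∀ n, Dn n ⊆ D) → (∀ m n, m ≠ n → Disjoint (Dn m) (Dn n)) →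
      ∀ Q : ℕ → CL ↥X, (∀ n, (Q n).1 = {x : ↥X | ↑x ∈ Dn n}) →
        ∃ F : CL ↥X, MapClusterPt F atTop Q) :
    (∀ An : ℕ → Set K, (∀ n, (An n).Finite) → (∀ n, (An n).Nonempty) →
      (∀ n, An n ⊆ D) →
      ∀ Q : ℕ → CL ↥X, (∀ n, (Q n).1 = {x : ↥X | ↑x ∈ An n}) →
        ∃ F : CL ↥X, MapClusterPt F atTop Q) ∧
    (∀ f : CL ↥X → ℝ, Continuous f → Bornology.IsBounded (Set.range f)) :=
  stmt18_general K D hDdense X hDX hyp
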